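/- arXiv:2210.10012 — 4 statements merged into one kernel-verified Lean document; each statement's English description precedes it below -/
import Mathlib

section
/- Let δ ∈ (0,1), θ ∈ ℝ^D, φ ∈ ℝ, and α, β ∈ ℝ. Then there exist θ' ∈ ℝ^D and φ' ∈ ℝ such that for every x ∈ ℝ^D with θᵀx + φ ≠ 0, one has θ'ᵀx + φ' ≠ 0 and ρ_δ(σ(α·τ(θᵀx + φ) + β)) = ρ_δ(σ(θ'ᵀx + φ')). In words, the composition of the hard-thresholded linear decision rule x ↦ τ(θᵀx+φ) with a δ-discretized binary log-linear model applied to that threshold value is itself realized (on the set where θᵀx+φ ≠ 0) by a member of the family V^δ of δ-discretized binary log-linear models on ℝ^D. -/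
open scoped BigOperators

/-- The logistic function `σ(u) = 1/(1+exp(−u))`. -/
noncomputable def logistic (u : ℝ) : ℝ := 1 / (1 + Real.exp (-u))

/-- The hard threshold function `τ(u) = 1` if `u > 0` and `τ(u) = 0` otherwise. -/
noncomputable def hardThreshold (u : ℝ) : ℝ := if u > 0 then 1 else 0

/-- The `δ`-discretization function `ρ_δ(p) = δ` if `p ≥ 1/2` and `1 − δ` otherwise. -/
noncomputable def discretize (δ : ℝ) (p : ℝ) : ℝ := if p ≥ 1/2 then δ else 1 - δ

/-- The composition of a hard-thresholded linear decision rule with a `δ`-discretized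
binary log-linear model applied to the threshold value is itself realized (on the set
where `θᵀx + φ ≠ 0`) by a member of the family `V^δ` of `δ`-discretized binary
log-linear models on `ℝ^D`. -/
theorem discretized_loglinear_composition
    (D : ℕ) (δ : ℝ) (hδ : δ ∈ Set.Ioo (0:ℝ) 1)
    (θ : Fin D → ℝ) (φ : ℝ) (α β : ℝ) :
    ∃ (θ' : Fin D → ℝ) (φ' : ℝ),
      ∀ x : Fin D → ℝ, (∑ i, θ i * x i) + φ ≠ 0 →
        (∑ i, θ' i * x i) + φ' ≠ 0 ∧
        discretize δ (logistic (α * hardThreshold ((∑ i, θ i * x i) + φ) + β)) =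
          discretize δ (logistic ((∑ i, θ' i * x i) + φ')) := by
  have hpos : ∀ u : ℝ, (0:ℝ) < 1 + Real.exp (-u) := fun u =>
    lt_trans one_pos (by linarith [Real.exp_pos (-u)])
  have hlog : ∀ u : ℝ, logistic u ≥ 1/2 ↔ u ≥ 0 := by
    intro u
    unfold logistic
    rw [ge_iff_le, div_le_div_iff₀ (by norm_num) (hpos u)]
    constructor
    · intro h
      by_contra hu
      push_neg at hu
      have := Real.one_lt_exp_iff.mpr (by linarith : (0:ℝ) < -u)
      linarith
    · intro h
      have : Real.exp (-u) ≤ 1 := Real.exp_le_one_iff.mpr (by linarith)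
      linarith
  have key : ∀ u v : ℝ, (u ≥ 0 ↔ v ≥ 0) →
      discretize δ (logistic u) = discretize δ (logistic v) := by
    intro u v huv
    unfold discretize
    by_cases h : logistic v ≥ 1/2
    · rw [if_pos h, if_pos ((hlog u).mpr (huv.mpr ((hlog v).mp h)))]
    · rw [if_neg h, if_neg (fun hu => h ((hlog v).mpr (huv.mp ((hlog u).mp hu))))]
  rcases le_or_gt 0 (α + β) with hab | hab <;> rcases le_or_gt 0 β with hb | hb
  · -- both ≥ 0: constant δ
    refine ⟨fun _ => 0, 1, fun x hx => ?_⟩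
    simp only [zero_mul, Finset.sum_const_zero, zero_add]
    refine ⟨one_ne_zero, key _ _ ?_⟩
    unfold hardThreshold
    split <;> constructor <;> intro _ <;> linarith
  · -- α+β ≥ 0, β < 0: same sign as s
    refine ⟨θ, φ, fun x hx => ⟨hx, key _ _ ?_⟩⟩
    unfold hardThreshold
    split
    · constructor <;> intro _ <;> linarith
    · rename_i h
      push_neg at h
      have hs : (∑ i, θ i * x i) + φ < 0 := lt_of_le_of_ne h hx
      constructor <;> intro _ <;> linarith
  · -- α+β < 0, β ≥ 0: opposite sign
    refine ⟨fun i => -θ i, -φ, fun x hx => ?_⟩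
    have hsum : (∑ i, (fun i => -θ i) i * x i) + -φ = -((∑ i, θ i * x i) + φ) := by
      simp [neg_mul, Finset.sum_neg_distrib]
      ring
    rw [hsum]
    refine ⟨neg_ne_zero.mpr hx, key _ _ ?_⟩
    unfold hardThreshold
    split
    · rename_i h
      constructor <;> intro _ <;> linarith
    · rename_i h
      push_neg at h
      have hs : (∑ i, θ i * x i) + φ < 0 := lt_of_le_of_ne h hx
      constructor <;> intro _ <;> linarith
  · -- both < 0: constant 1-δ
    refine ⟨fun _ => 0, -1, fun x hx => ?_⟩
    simp only [zero_mul, Finset.sum_const_zero, zero_add]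
    refine ⟨neg_ne_zero.mpr one_ne_zero, key _ _ ?_⟩
    unfold hardThreshold
    split <;> constructor <;> intro _ <;> linarith
end

section
/- Let δ ∈ (0,1), let μ be a probability measure on ℝ^D × {0,1} with coordinate random variables (X, Z), and let θ ∈ ℝ^D, φ ∈ ℝ satisfy θᵀx + φ ≠ 0 for μ-almost every x. Define Ŷ = τ(θᵀX + φ) ∈ {0,1} ⊆ ℝ. Then I_{V^δ}(Ŷ → Z) ≤ I_{V^δ}(X → Z), where I_{V^δ}(X → Z) is computed with the family V^δ on ℝ^D and I_{V^δ}(Ŷ → Z) is computed with the family V^δ on ℝ (viewing Ŷ as a real-valued input). That is, post-processing by a hard-thresholded linear classifier cannot increase V^δ-information about Z. -/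
open MeasureTheory
open scoped BigOperators

/-- A member of the family `V^δ` of `δ`-discretized binary log-linear models, with
parameters `a, γ`: the conditional probability it assigns to the label `z ∈ {0,1}`
(encoded as a `Bool`) given the input `x`, namely `q(0|x) = ρ_δ(σ(aᵀx+γ))` and
`q(1|x) = 1 − q(0|x)`. -/
noncomputable def qDisc {ι : Type*} [Fintype ι] (δ : ℝ) (a : ι → ℝ) (γ : ℝ)
    (x : ι → ℝ) (z : Bool) : ℝ :=
  if z then 1 - discretize δ (logistic ((∑ i, a i * x i) + γ))
  else discretize δ (logistic ((∑ i, a i * x i) + γ))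

/-- The conditional `V^δ`-entropy `H_{V^δ}(Z|X) = −sup_{q∈V^δ} E[log q(z|x)]` of a joint
distribution `μ` of `(X, Z)`. -/
noncomputable def condEntDisc {ι : Type*} [Fintype ι] (δ : ℝ)
    (μ : Measure ((ι → ℝ) × Bool)) : ℝ :=
  - ⨆ p : (ι → ℝ) × ℝ, ∫ w, Real.log (qDisc δ p.1 p.2 w.1 w.2) ∂μ

/-- The `V^δ`-entropy `H_{V^δ}(Z) = −sup E[log q(z)]` over input-independent members
of `V^δ` (those with `a = 0`). -/
noncomputable def entDisc {ι : Type*} [Fintype ι] (δ : ℝ)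
    (μ : Measure ((ι → ℝ) × Bool)) : ℝ :=
  - ⨆ γ : ℝ, ∫ w, Real.log (qDisc δ (fun _ : ι => (0:ℝ)) γ w.1 w.2) ∂μ

/-- The `V^δ`-information `I_{V^δ}(X → Z) = H_{V^δ}(Z) − H_{V^δ}(Z|X)`. -/
noncomputable def vInfoDisc {ι : Type*} [Fintype ι] (δ : ℝ)
    (μ : Measure ((ι → ℝ) × Bool)) : ℝ :=
  entDisc δ μ - condEntDisc δ μ

/-! A member of `V^δ` sees its input only through the sign decision `0 ≤ aᵀx + γ`. Hence a
pushforward of `μ` that keeps the label leaves the `V^δ`-entropy unchanged, and can only raise the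
conditional `V^δ`-entropy once every decision on the image, pulled back, agrees `μ`-a.e. with a
decision on the source. For `Ŷ = τ(θᵀX + φ)` a decision on `Ŷ` is one of the four Boolean functions
of the sign of `t = θᵀX + φ`, and away from the null set `{t = 0}` each of them is the sign of an
affine function `c t + d`. -/

lemma one_half_le_logistic_iff (u : ℝ) : 1 / 2 ≤ logistic u ↔ 0 ≤ u := by
  rw [logistic, one_div_le_one_div two_pos (by positivity), ← one_add_one_eq_two,
    add_le_add_iff_left, Real.exp_le_one_iff, neg_nonpos]

lemma discretize_logistic (δ u : ℝ) :
    discretize δ (logistic u) = if 0 ≤ u then δ else 1 - δ := by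
  simp only [discretize, ge_iff_le, one_half_le_logistic_iff]

lemma qDisc_eq_ite {ι : Type*} [Fintype ι] (δ : ℝ) (a : ι → ℝ) (γ : ℝ) (x : ι → ℝ)
    (z : Bool) :
    qDisc δ a γ x z = if (0 ≤ ∑ i, a i * x i + γ ↔ z) then 1 - δ else δ := by
  by_cases h : 0 ≤ ∑ i, a i * x i + γ <;> cases z <;> simp [qDisc, discretize_logistic, h]

lemma measurable_qDisc {ι : Type*} [Fintype ι] (δ : ℝ) (a : ι → ℝ) (γ : ℝ) :
    Measurable fun w : (ι → ℝ) × Bool => qDisc δ a γ w.1 w.2 := by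
  simp only [qDisc, discretize_logistic]
  have hs : MeasurableSet {w : (ι → ℝ) × Bool | 0 ≤ ∑ i, a i * w.1 i + γ} :=
    measurableSet_le measurable_const (by fun_prop)
  exact Measurable.ite (measurable_snd (measurableSet_singleton true))
    ((measurable_const.ite hs measurable_const).const_sub _)
    (measurable_const.ite hs measurable_const)

lemma qDisc_congr {ι κ : Type*} [Fintype ι] [Fintype κ] (δ : ℝ) {a : ι → ℝ} {γ : ℝ}
    {x : ι → ℝ} {α : κ → ℝ} {γ' : ℝ} {y : κ → ℝ}
    (h : 0 ≤ ∑ i, a i * x i + γ ↔ 0 ≤ ∑ i, α i * y i + γ') (z : Bool) :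
    qDisc δ a γ x z = qDisc δ α γ' y z := by
  simp only [qDisc_eq_ite, h]

lemma abs_log_qDisc_le {ι : Type*} [Fintype ι] (δ : ℝ) (a : ι → ℝ) (γ : ℝ)
    (x : ι → ℝ) (z : Bool) :
    |Real.log (qDisc δ a γ x z)| ≤ max |Real.log δ| |Real.log (1 - δ)| := by
  rw [qDisc_eq_ite]
  split_ifs
  exacts [le_max_right _ _, le_max_left _ _]

lemma bddAbove_range_integral_log_qDisc {ι : Type*} [Fintype ι] (δ : ℝ)
    (μ : Measure ((ι → ℝ) × Bool)) [IsFiniteMeasure μ] :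
    BddAbove (Set.range fun p : (ι → ℝ) × ℝ => ∫ w, Real.log (qDisc δ p.1 p.2 w.1 w.2) ∂μ) := by
  refine ⟨max |Real.log δ| |Real.log (1 - δ)| * μ.real Set.univ, ?_⟩
  rintro _ ⟨p, rfl⟩
  refine (Real.le_norm_self _).trans (norm_integral_le_of_norm_le_const ?_)
  exact Filter.Eventually.of_forall fun w => abs_log_qDisc_le δ p.1 p.2 w.1 w.2

lemma integral_log_qDisc_map {ι κ : Type*} [Fintype κ] (δ : ℝ)
    (μ : Measure ((ι → ℝ) × Bool)) {f : (ι → ℝ) × Bool → (κ → ℝ) × Bool} (hf : Measurable f)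
    (a : κ → ℝ) (γ : ℝ) :
    ∫ w, Real.log (qDisc δ a γ w.1 w.2) ∂(μ.map f)
      = ∫ w, Real.log (qDisc δ a γ (f w).1 (f w).2) ∂μ :=
  integral_map hf.aemeasurable (measurable_qDisc δ a γ).log.aestronglyMeasurable

section Map

variable {ι κ : Type*} [Fintype ι] [Fintype κ] (δ : ℝ) (μ : Measure ((ι → ℝ) × Bool))
  {f : (ι → ℝ) × Bool → (κ → ℝ) × Bool}

lemma entDisc_map (hf : Measurable f) (hsnd : ∀ w, (f w).2 = w.2) :
    entDisc δ (μ.map f) = entDisc δ μ := by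
  simp only [entDisc, integral_log_qDisc_map δ μ hf, hsnd]
  simp only [qDisc, zero_mul, Finset.sum_const_zero]

lemma condEntDisc_le_condEntDisc_map [IsFiniteMeasure μ] (hf : Measurable f)
    (hsnd : ∀ w, (f w).2 = w.2)
    (hpull : ∀ (a : κ → ℝ) (γ : ℝ), ∃ (α : ι → ℝ) (γ' : ℝ), ∀ᵐ w ∂μ,
      (0 ≤ ∑ i, a i * (f w).1 i + γ ↔ 0 ≤ ∑ i, α i * w.1 i + γ')) :
    condEntDisc δ μ ≤ condEntDisc δ (μ.map f) := by
  refine neg_le_neg (ciSup_le fun p => ?_)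
  obtain ⟨α, γ', hα⟩ := hpull p.1 p.2
  calc ∫ w, Real.log (qDisc δ p.1 p.2 w.1 w.2) ∂(μ.map f)
      = ∫ w, Real.log (qDisc δ α γ' w.1 w.2) ∂μ := by
        rw [integral_log_qDisc_map δ μ hf]
        refine integral_congr_ae (hα.mono fun w hw => ?_)
        simp only [hsnd, qDisc_congr δ hw]
    _ ≤ _ := le_ciSup (bddAbove_range_integral_log_qDisc δ μ) (α, γ')

lemma vInfoDisc_map_le [IsFiniteMeasure μ] (hf : Measurable f)
    (hsnd : ∀ w, (f w).2 = w.2)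
    (hpull : ∀ (a : κ → ℝ) (γ : ℝ), ∃ (α : ι → ℝ) (γ' : ℝ), ∀ᵐ w ∂μ,
      (0 ≤ ∑ i, a i * (f w).1 i + γ ↔ 0 ≤ ∑ i, α i * w.1 i + γ')) :
    vInfoDisc δ (μ.map f) ≤ vInfoDisc δ μ := by
  rw [vInfoDisc, vInfoDisc, entDisc_map δ μ hf hsnd]
  exact sub_le_sub_left (condEntDisc_le_condEntDisc_map δ μ hf hsnd hpull) _

end Map

lemma exists_affine_nonneg_iff_ite (P Q : Prop) :
    ∃ c d : ℝ, ∀ t : ℝ, t ≠ 0 → (0 ≤ c * t + d ↔ if 0 < t then P else Q) := by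
  by_cases hP : P <;> by_cases hQ : Q
  · exact ⟨0, 0, fun t _ => by split_ifs <;> simp [hP, hQ]⟩
  · refine ⟨1, 0, fun t ht => ?_⟩
    rcases ht.lt_or_gt with h | h <;> simp [h, h.le, h.not_gt, h.not_ge, hP, hQ]
  · refine ⟨-1, 0, fun t ht => ?_⟩
    rcases ht.lt_or_gt with h | h <;> simp [h, h.le, h.not_gt, h.not_ge, hP, hQ]
  · exact ⟨0, -1, fun t _ => by split_ifs <;> simp [hP, hQ]⟩

@[fun_prop]
lemma measurable_hardThreshold : Measurable hardThreshold :=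
  Measurable.ite measurableSet_Ioi measurable_const measurable_const

lemma nonneg_mul_hardThreshold_add_iff (a γ t : ℝ) :
    0 ≤ a * hardThreshold t + γ ↔ if 0 < t then 0 ≤ a + γ else 0 ≤ γ := by
  unfold hardThreshold
  split_ifs <;> simp

theorem vInfoDisc_hardThreshold_le_general
    (D : ℕ) (δ : ℝ)
    (μ : Measure ((Fin D → ℝ) × Bool)) [IsProbabilityMeasure μ]
    (θ : Fin D → ℝ) (φ : ℝ)
    (hne : ∀ᵐ w ∂μ, (∑ i, θ i * w.1 i) + φ ≠ 0) :
    vInfoDisc δ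
        (μ.map (fun w => ((fun _ : Fin 1 => hardThreshold ((∑ i, θ i * w.1 i) + φ)), w.2)))
      ≤ vInfoDisc δ μ := by
  refine vInfoDisc_map_le δ μ (by fun_prop) (fun _ => rfl) fun a γ => ?_
  obtain ⟨c, d, hcd⟩ := exists_affine_nonneg_iff_ite (0 ≤ a 0 + γ) (0 ≤ γ)
  refine ⟨c • θ, c * φ + d, hne.mono fun w hw => ?_⟩
  have hscore : ∑ i, (c • θ) i * w.1 i + (c * φ + d) = c * (∑ i, θ i * w.1 i + φ) + d := by
    simp only [Pi.smul_apply, smul_eq_mul, mul_add, mul_assoc, Finset.mul_sum]; ring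
  rw [Fin.sum_univ_one, nonneg_mul_hardThreshold_add_iff, hscore, hcd _ hw]

/-- Post-processing by a hard-thresholded linear classifier `Ŷ = τ(θᵀX + φ)` cannot
increase `V^δ`-information about `Z`: `I_{V^δ}(Ŷ → Z) ≤ I_{V^δ}(X → Z)`, where `Ŷ` is
viewed as a real-valued (one-dimensional) input. -/
theorem vInfoDisc_hardThreshold_le
    (D : ℕ) (δ : ℝ) (hδ : δ ∈ Set.Ioo (0:ℝ) 1)
    (μ : Measure ((Fin D → ℝ) × Bool)) [IsProbabilityMeasure μ]
    (θ : Fin D → ℝ) (φ : ℝ)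
    (hne : ∀ᵐ w ∂μ, (∑ i, θ i * w.1 i) + φ ≠ 0) :
    vInfoDisc δ
        (μ.map (fun w => ((fun _ : Fin 1 => hardThreshold ((∑ i, θ i * w.1 i) + φ)), w.2)))
      ≤ vInfoDisc δ μ :=
  vInfoDisc_hardThreshold_le_general D δ μ θ φ hne
end

section
/- Let μ be a K-Voronoi probability measure on ℝ^D × {0,1} with respect to vectors θ_1, …, θ_K ∈ ℝ^D. Define, for each sign pattern s' ∈ {−1,1}^K, the parameter vector θ*_{s'} = Σ_{k=1}^K s'_k θ_k. Then there exists a function g' : {−1,1}^K → {0,1} such that for μ-almost every (x, z): the map s' ↦ θ*_{s'}ᵀx has a unique maximizer over {−1,1}^K, and z = g'(argmax_{s'∈{−1,1}^K} θ*_{s'}ᵀx). In words, the hard (argmax) predictions of a multiclass linear classifier over the representations determine the protected attribute Z exactly. -/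
/-!
Each summand `±(θ_kᵀx)` of the score is at most `|θ_kᵀx|`, with equality exactly when the sign
is that of `θ_kᵀx` (when `θ_kᵀx ≠ 0`). So the sign pattern of `x` is the unique maximizer of the
score, and the label, being a function of the sign pattern, is a function of the argmax.
-/

open MeasureTheory
open scoped BigOperators

/-- The score of `x` under the linear classifier with parameter vector
`θ*_{s'} = Σ_k s'_k θ_k`, where the sign pattern `s'` is encoded as a Boolean vector
(`true ↦ +1`, `false ↦ −1`): `f(s') = θ*_{s'}ᵀx = Σ_k s'_k (θ_kᵀx)`. -/
noncomputable def signScore {D K : ℕ} (θ : Fin K → Fin D → ℝ) (x : Fin D → ℝ)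
    (s' : Fin K → Bool) : ℝ :=
  ∑ k, (if s' k then (1:ℝ) else -1) * (∑ d, θ k d * x d)

lemma ite_mul_le_abs (b : Bool) (a : ℝ) : (if b then (1:ℝ) else -1) * a ≤ |a| := by
  cases b
  · simpa using neg_le_abs a
  · simpa using le_abs_self a

lemma ite_decide_pos_mul (a : ℝ) : (if decide (0 < a) then (1:ℝ) else -1) * a = |a| := by
  rcases lt_or_ge 0 a with h | h
  · simp [h, abs_of_pos h]
  · simp [not_lt.mpr h, abs_of_nonpos h]

lemma ite_mul_lt_abs {b : Bool} {a : ℝ} (ha : a ≠ 0) (hb : b ≠ decide (0 < a)) :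
    (if b then (1:ℝ) else -1) * a < |a| := by
  rcases ha.lt_or_gt with h | h
  · have : b = true := by simpa [not_lt.mpr h.le] using hb
    rw [this, if_pos rfl, one_mul, abs_of_neg h]
    linarith
  · have : b = false := by simpa [h] using hb
    rw [this, if_neg Bool.false_ne_true, abs_of_pos h]
    linarith

lemma sum_ite_mul_lt_sum_abs {ι : Type*} [Fintype ι] {a : ι → ℝ} (ha : ∀ k, a k ≠ 0)
    {s : ι → Bool} (hs : s ≠ fun k => decide (0 < a k)) :
    ∑ k, (if s k then (1:ℝ) else -1) * a k < ∑ k, |a k| := by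
  obtain ⟨k, hk⟩ := Function.ne_iff.mp hs
  exact Finset.sum_lt_sum (fun j _ => ite_mul_le_abs (s j) (a j))
    ⟨k, Finset.mem_univ k, ite_mul_lt_abs (ha k) hk⟩

lemma signScore_lt_of_ne_signPattern {D K : ℕ} {θ : Fin K → Fin D → ℝ} {x : Fin D → ℝ}
    (hx : ∀ k, ∑ d, θ k d * x d ≠ 0) {s' : Fin K → Bool}
    (hs' : s' ≠ fun k => decide (0 < ∑ d, θ k d * x d)) :
    signScore θ x s' < signScore θ x (fun k => decide (0 < ∑ d, θ k d * x d)) := by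
  simp only [signScore, ite_decide_pos_mul]
  exact sum_ite_mul_lt_sum_abs hx hs'

theorem voronoi_argmax_determines_label_general
    (D K : ℕ) (μ : Measure ((Fin D → ℝ) × Bool))
    (θ : Fin K → Fin D → ℝ)
    (hne : ∀ᵐ w ∂μ, ∀ k, (∑ d, θ k d * w.1 d) ≠ 0)
    (g : (Fin K → Bool) → Bool)
    (hg : ∀ᵐ w ∂μ, w.2 = g (fun k => decide (0 < ∑ d, θ k d * w.1 d))) :
    ∃ g' : (Fin K → Bool) → Bool,
      ∀ᵐ w ∂μ, ∃ s₀ : Fin K → Bool,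
        (∀ s' : Fin K → Bool, s' ≠ s₀ → signScore θ w.1 s' < signScore θ w.1 s₀) ∧
        w.2 = g' s₀ := by
  refine ⟨g, ?_⟩
  filter_upwards [hne, hg] with w hw hz
  exact ⟨_, fun s' hs' => signScore_lt_of_ne_signPattern hw hs', hz⟩

/-- For a `K`-Voronoi probability measure `μ` on `ℝ^D × {0,1}` with respect to
`θ_1, …, θ_K` (μ-a.s. `θ_kᵀx ≠ 0` for all `k`, and the label `z` is a.s. a function `g`
of the sign pattern of `x`), the hard (argmax) predictions of the multiclass linear
classifier with parameter vectors `θ*_{s'} = Σ_k s'_k θ_k` determine `Z` exactly: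
there is `g'` such that μ-a.s. the map `s' ↦ θ*_{s'}ᵀx` has a unique maximizer `s₀`
over `{−1,1}^K` and `z = g'(s₀)`. -/
theorem voronoi_argmax_determines_label
    (D K : ℕ) (μ : Measure ((Fin D → ℝ) × Bool)) [IsProbabilityMeasure μ]
    (θ : Fin K → Fin D → ℝ)
    (hne : ∀ᵐ w ∂μ, ∀ k, (∑ d, θ k d * w.1 d) ≠ 0)
    (g : (Fin K → Bool) → Bool)
    (hg : ∀ᵐ w ∂μ, w.2 = g (fun k => decide (0 < ∑ d, θ k d * w.1 d))) :
    ∃ g' : (Fin K → Bool) → Bool,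
      ∀ᵐ w ∂μ, ∃ s₀ : Fin K → Bool,
        (∀ s' : Fin K → Bool, s' ≠ s₀ → signScore θ w.1 s' < signScore θ w.1 s₀) ∧
        w.2 = g' s₀ :=
  voronoi_argmax_determines_label_general D K μ θ hne g hg
end

section
/- Let μ be a probability measure on ℝ^D × {0,1} with coordinate random variables (X, Z) that is globally balanced: μ(Z=0) = μ(Z=1) = 1/2. Let μ_0 and μ_1 be the conditional distributions of X given Z=0 and Z=1 respectively (μ_z(A) = μ(A × {z}) / μ(Z=z)). Let V be the family of binary log-linear models on ℝ^D, let h : ℝ^D → ℝ^D be measurable, and suppose h ε-guards X against Z in terms of accuracy, i.e. I^A_V(h(X) → Z) < ε. Then for every θ ∈ ℝ^D and φ ∈ ℝ, the deterministic downstream prediction Ŷ(x) = τ(θᵀh(x) + φ) satisfies the L1 independence-gap bound Σ_{y ∈ {0,1}} | μ_0({x : Ŷ(x) = y}) − μ_1({x : Ŷ(x) = y}) | ≤ 4ε. -/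
open MeasureTheory
open scoped BigOperators

/-- The hard prediction of the binary log-linear model with parameters `a, γ` and
tie-breaking convention `b`: predict `1` (`true`) if `aᵀx+γ > 0`, `0` (`false`) if
`aᵀx+γ < 0`, and `b` if `aᵀx+γ = 0`. -/
noncomputable def linPred {ι : Type*} [Fintype ι] (a : ι → ℝ) (γ : ℝ) (b : Bool)
    (x : ι → ℝ) : Bool :=
  if 0 < (∑ i, a i * x i) + γ then true
  else if (∑ i, a i * x i) + γ < 0 then false
  else b

/-- The conditional `V`-accuracy `A_V(Z|X)`: the supremum, over parameters `a, γ` and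
both tie-breaking conventions, of the probability of a correct prediction. -/
noncomputable def condAcc {ι : Type*} [Fintype ι]
    (μ : Measure ((ι → ℝ) × Bool)) : ℝ :=
  ⨆ p : (ι → ℝ) × ℝ × Bool, (μ {w | linPred p.1 p.2.1 p.2.2 w.1 = w.2}).toReal

/-- The `V`-accuracy `A_V(Z) = max(μ(Z=0), μ(Z=1))`, the best accuracy of a constant
prediction. -/
noncomputable def uncondAcc {ι : Type*} [Fintype ι]
    (μ : Measure ((ι → ℝ) × Bool)) : ℝ :=
  max (μ {w | w.2 = false}).toReal (μ {w | w.2 = true}).toReal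

/-- The accuracy-based `V`-information `I^A_V(X → Z) = A_V(Z|X) − A_V(Z)`. -/
noncomputable def accInfo {ι : Type*} [Fintype ι]
    (μ : Measure ((ι → ℝ) × Bool)) : ℝ :=
  condAcc μ - uncondAcc μ

/-- If `μ` is globally balanced (`μ(Z=0) = μ(Z=1) = 1/2`) and the guarding function `h`
`ε`-guards `X` against `Z` in terms of accuracy, i.e. `I^A_V(h(X) → Z) < ε`, then every
deterministic downstream prediction `Ŷ(x) = τ(θᵀh(x) + φ)` satisfies the `L1`
independence-gap bound `Σ_{y ∈ {0,1}} |μ_0(Ŷ = y) − μ_1(Ŷ = y)| ≤ 4ε`, where `μ_0, μ_1`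
are the conditional distributions of `X` given `Z = 0, 1`. -/
theorem independence_gap_of_acc_guarded
    (D : ℕ) (ε : ℝ)
    (μ : Measure ((Fin D → ℝ) × Bool)) [IsProbabilityMeasure μ]
    (hbal0 : μ {w | w.2 = false} = 1/2) (hbal1 : μ {w | w.2 = true} = 1/2)
    (μ0 μ1 : Measure (Fin D → ℝ))
    (hμ0 : ∀ A : Set (Fin D → ℝ), MeasurableSet A →
      μ0 A = μ (A ×ˢ ({false} : Set Bool)) / μ {w | w.2 = false})
    (hμ1 : ∀ A : Set (Fin D → ℝ), MeasurableSet A →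
      μ1 A = μ (A ×ˢ ({true} : Set Bool)) / μ {w | w.2 = true})
    (h : (Fin D → ℝ) → (Fin D → ℝ)) (hmeas : Measurable h)
    (hguard : accInfo (μ.map (fun w => (h w.1, w.2))) < ε)
    (θ : Fin D → ℝ) (φ : ℝ) :
    |(μ0 {x | hardThreshold ((∑ i, θ i * h x i) + φ) = 0}).toReal -
        (μ1 {x | hardThreshold ((∑ i, θ i * h x i) + φ) = 0}).toReal| +
      |(μ0 {x | hardThreshold ((∑ i, θ i * h x i) + φ) = 1}).toReal -
        (μ1 {x | hardThreshold ((∑ i, θ i * h x i) + φ) = 1}).toReal|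
      ≤ 4 * ε := by
  classical
  -- the linear functional in h-space
  set s : (Fin D → ℝ) → ℝ := fun y => (∑ i, θ i * y i) + φ with hs
  have hsmeas : Measurable s := by
    apply Measurable.add _ measurable_const
    exact Finset.measurable_sum _ fun i _ => measurable_const.mul (measurable_pi_apply i)
  set T : Set (Fin D → ℝ) := {y | 0 < s y} with hTdef
  have hTm : MeasurableSet T := measurableSet_lt measurable_const hsmeas
  set A : Set (Fin D → ℝ) := h ⁻¹' T with hAdef
  have hAm : MeasurableSet A := hmeas hTm
  set f : ((Fin D → ℝ) × Bool) → ((Fin D → ℝ) × Bool) := fun w => (h w.1, w.2) with hfdef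
  have hf : Measurable f := (hmeas.comp measurable_fst).prodMk measurable_snd
  set ν : Measure ((Fin D → ℝ) × Bool) := μ.map f with hνdef
  haveI : IsProbabilityMeasure ν := Measure.isProbabilityMeasure_map hf.aemeasurable
  -- rewrite the goal sets
  have hset1 : {x | hardThreshold ((∑ i, θ i * h x i) + φ) = 1} = A := by
    ext x
    by_cases h' : 0 < (∑ i, θ i * h x i) + φ
    · simp [hardThreshold, h', hAdef, hTdef, hs]
    · simp [hardThreshold, h', hAdef, hTdef, hs, not_lt.mp h']
  have hset0 : {x | hardThreshold ((∑ i, θ i * h x i) + φ) = 0} = Aᶜ := by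
    ext x
    by_cases h' : 0 < (∑ i, θ i * h x i) + φ
    · simp [hardThreshold, h', hAdef, hTdef, hs]
    · simp [hardThreshold, h', hAdef, hTdef, hs, not_lt.mp h']
  -- the two witness predictors, as sets in the mapped space
  have hS₁ : {w : (Fin D → ℝ) × Bool | linPred θ φ false w.1 = w.2}
      = (T ×ˢ ({true} : Set Bool)) ∪ (Tᶜ ×ˢ ({false} : Set Bool)) := by
    ext ⟨y, z⟩
    simp only [Set.mem_setOf_eq, Set.mem_union, Set.mem_prod, Set.mem_singleton_iff,
      Set.mem_compl_iff, hTdef, hs, linPred]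
    rcases lt_trichotomy 0 ((∑ i, θ i * y i) + φ) with h' | h' | h'
    · simp [h', eq_comm]
    · have h1 : ¬ (0 < (∑ i, θ i * y i) + φ) := by rw [← h']; exact lt_irrefl 0
      have h2 : ¬ ((∑ i, θ i * y i) + φ < 0) := by rw [← h']; exact lt_irrefl 0
      simp [h1, h2, eq_comm]
    · simp [h', not_lt.mpr h'.le, eq_comm]
  have hneg : ∀ y : Fin D → ℝ, (∑ i, (-θ) i * y i) + -φ = -((∑ i, θ i * y i) + φ) := by
    intro y; simp [neg_mul, ← Finset.sum_neg_distrib, add_comm]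
  have hS₂ : {w : (Fin D → ℝ) × Bool | linPred (-θ) (-φ) true w.1 = w.2}
      = (Tᶜ ×ˢ ({true} : Set Bool)) ∪ (T ×ˢ ({false} : Set Bool)) := by
    ext ⟨y, z⟩
    have hn := hneg y
    simp only [Set.mem_setOf_eq, Set.mem_union, Set.mem_prod, Set.mem_singleton_iff,
      Set.mem_compl_iff, hTdef, hs, linPred]
    rcases lt_trichotomy 0 ((∑ i, θ i * y i) + φ) with h' | h' | h'
    · have h1 : ¬ (0 < (∑ i, (-θ) i * y i) + -φ) := by
        rw [hn]; exact not_lt.mpr (by linarith)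
      have h2 : (∑ i, (-θ) i * y i) + -φ < 0 := by rw [hn]; linarith
      rw [if_neg h1, if_pos h2]
      simp [h', eq_comm]
    · have h1 : ¬ (0 < (∑ i, (-θ) i * y i) + -φ) := by
        rw [hn]; exact not_lt.mpr (by linarith)
      have h2 : ¬ ((∑ i, (-θ) i * y i) + -φ < 0) := by
        rw [hn]; exact not_lt.mpr (by linarith)
      have h3 : ¬ (0 < (∑ i, θ i * y i) + φ) := by rw [← h']; exact lt_irrefl 0
      rw [if_neg h1, if_neg h2]
      simp [h3, eq_comm]
    · have h1 : 0 < (∑ i, (-θ) i * y i) + -φ := by rw [hn]; linarith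
      rw [if_pos h1]
      simp [not_lt.mpr h'.le, eq_comm]
  -- preimages
  have hpre : ∀ U V : Set (Fin D → ℝ),
      f ⁻¹' ((U ×ˢ ({true} : Set Bool)) ∪ (V ×ˢ ({false} : Set Bool)))
        = ((h ⁻¹' U) ×ˢ ({true} : Set Bool)) ∪ ((h ⁻¹' V) ×ˢ ({false} : Set Bool)) := by
    intro U V; ext ⟨y, z⟩
    simp only [Set.mem_preimage, Set.mem_union, Set.mem_prod, Set.mem_singleton_iff, hfdef]
  -- disjointness and partition lemmas
  have hdisj : ∀ U V : Set (Fin D → ℝ),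
      Disjoint (U ×ˢ ({true} : Set Bool)) (V ×ˢ ({false} : Set Bool)) := by
    intro U V
    rw [Set.disjoint_left]
    rintro ⟨y, z⟩ ⟨_, h1⟩ ⟨_, h2⟩
    simp only [Set.mem_singleton_iff] at h1 h2
    rw [h1] at h2; exact Bool.noConfusion h2
  have hdisjC : ∀ (U : Set (Fin D → ℝ)) (b : Set Bool),
      Disjoint (U ×ˢ b) (Uᶜ ×ˢ b) := by
    intro U b
    rw [Set.disjoint_left]
    rintro ⟨y, z⟩ ⟨h1, _⟩ ⟨h2, _⟩
    exact h2 h1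
  have hpart : ∀ (b : Bool), (A ×ˢ ({b} : Set Bool)) ∪ (Aᶜ ×ˢ ({b} : Set Bool))
      = {w : (Fin D → ℝ) × Bool | w.2 = b} := by
    intro b; ext ⟨y, z⟩
    by_cases hy : y ∈ A <;>
      simp only [Set.mem_union, Set.mem_prod, Set.mem_singleton_iff, Set.mem_compl_iff,
        Set.mem_setOf_eq, hy] <;> tauto
  -- measures of the pieces, as reals
  set t1 : ℝ := (μ (A ×ˢ ({true} : Set Bool))).toReal with ht1
  set t0 : ℝ := (μ (Aᶜ ×ˢ ({true} : Set Bool))).toReal with ht0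
  set s1 : ℝ := (μ (A ×ˢ ({false} : Set Bool))).toReal with hs1
  set s0 : ℝ := (μ (Aᶜ ×ˢ ({false} : Set Bool))).toReal with hs0
  have htop : ∀ S : Set ((Fin D → ℝ) × Bool), μ S ≠ ⊤ := fun S => measure_ne_top μ S
  have half : ((1/2 : ENNReal)).toReal = 1/2 := by norm_num [ENNReal.toReal_div]
  -- partition sums
  have hsum1 : t1 + t0 = 1/2 := by
    rw [ht1, ht0, ← ENNReal.toReal_add (htop _) (htop _),
      ← measure_union (hdisjC A {true}) (hAm.compl.prod (measurableSet_singleton _)),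
      hpart true, hbal1, half]
  have hsum0 : s1 + s0 = 1/2 := by
    rw [hs1, hs0, ← ENNReal.toReal_add (htop _) (htop _),
      ← measure_union (hdisjC A {false}) (hAm.compl.prod (measurableSet_singleton _)),
      hpart false, hbal0, half]
  -- conditional measures in terms of the pieces
  have hm1A : (μ1 A).toReal = 2 * t1 := by
    rw [hμ1 A hAm, hbal1, ENNReal.toReal_div, half, ht1]; ring
  have hm1Ac : (μ1 Aᶜ).toReal = 2 * t0 := by
    rw [hμ1 Aᶜ hAm.compl, hbal1, ENNReal.toReal_div, half, ht0]; ring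
  have hm0A : (μ0 A).toReal = 2 * s1 := by
    rw [hμ0 A hAm, hbal0, ENNReal.toReal_div, half, hs1]; ring
  have hm0Ac : (μ0 Aᶜ).toReal = 2 * s0 := by
    rw [hμ0 Aᶜ hAm.compl, hbal0, ENNReal.toReal_div, half, hs0]; ring
  -- condAcc bound
  have hbdd : BddAbove (Set.range fun p : (Fin D → ℝ) × ℝ × Bool =>
      (ν {w | linPred p.1 p.2.1 p.2.2 w.1 = w.2}).toReal) := by
    refine ⟨1, ?_⟩
    rintro x ⟨p, rfl⟩
    simpa using ENNReal.toReal_mono ENNReal.one_ne_top prob_le_one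
  have huncond : uncondAcc ν = 1/2 := by
    have hν : ∀ b : Bool, ν {w : (Fin D → ℝ) × Bool | w.2 = b} = 1/2 := by
      intro b
      have hmb : MeasurableSet {w : (Fin D → ℝ) × Bool | w.2 = b} := by
        have he : {w : (Fin D → ℝ) × Bool | w.2 = b} = Prod.snd ⁻¹' {b} := rfl
        rw [he]; exact measurable_snd (measurableSet_singleton b)
      rw [hνdef, Measure.map_apply hf hmb]
      have : f ⁻¹' {w : (Fin D → ℝ) × Bool | w.2 = b} = {w : (Fin D → ℝ) × Bool | w.2 = b} := rfl
      rw [this]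
      cases b
      · exact hbal0
      · exact hbal1
    rw [uncondAcc, hν false, hν true, half, max_self]
  have hcond : condAcc ν < 1/2 + ε := by
    have := hguard
    rw [accInfo, huncond] at this
    linarith
  -- accuracy of the first predictor
  have hacc1 : t1 + s0 < 1/2 + ε := by
    have hle : (ν {w | linPred θ φ false w.1 = w.2}).toReal ≤ condAcc ν :=
      le_ciSup hbdd ((θ, φ, false) : (Fin D → ℝ) × ℝ × Bool)
    have hval : (ν {w | linPred θ φ false w.1 = w.2}).toReal = t1 + s0 := by
      rw [hνdef, hS₁,
        Measure.map_apply hf (((hTm.prod (measurableSet_singleton _)).union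
          (hTm.compl.prod (measurableSet_singleton _)))), hpre,
        show h ⁻¹' T = A from rfl, show h ⁻¹' Tᶜ = Aᶜ from rfl,
        measure_union (hdisj _ _) (hAm.compl.prod (measurableSet_singleton _)),
        ENNReal.toReal_add (htop _) (htop _)]
    rw [hval] at hle
    linarith
  -- accuracy of the second predictor
  have hacc2 : t0 + s1 < 1/2 + ε := by
    have hle : (ν {w | linPred (-θ) (-φ) true w.1 = w.2}).toReal ≤ condAcc ν :=
      le_ciSup hbdd ((-θ, -φ, true) : (Fin D → ℝ) × ℝ × Bool)
    have hval : (ν {w | linPred (-θ) (-φ) true w.1 = w.2}).toReal = t0 + s1 := by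
      rw [hνdef, hS₂,
        Measure.map_apply hf (((hTm.compl.prod (measurableSet_singleton _)).union
          (hTm.prod (measurableSet_singleton _)))), hpre,
        show h ⁻¹' T = A from rfl, show h ⁻¹' Tᶜ = Aᶜ from rfl,
        measure_union (hdisj _ _) (hAm.prod (measurableSet_singleton _)),
        ENNReal.toReal_add (htop _) (htop _)]
    rw [hval] at hle
    linarith
  -- finish
  rw [hset0, hset1, hm0A, hm0Ac, hm1A, hm1Ac]
  rcases abs_cases (2 * s0 - 2 * t0) with ⟨e1, _⟩ | ⟨e1, _⟩ <;>
    rcases abs_cases (2 * s1 - 2 * t1) with ⟨e2, _⟩ | ⟨e2, _⟩ <;>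
      rw [e1, e2] <;> linarith
end
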